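/- arXiv:2103.15133 — 2 statements merged into one kernel-verified Lean document; each statement's English description precedes it below -/
import Mathlib

section
/- With h(V) = -s²V - p(V) - b as above, for V ∈ (v₋, v₊) the quantity f(V) := -p'(V) + (α+1)·h(V)/V is strictly positive, where α ≥ 0. -/
/-!
Since `s²` is minus the slope of the secant of `p` over `[v₋, v₊]` and `b` makes that secant pass
through `(v₊, p v₊)`, `h(V)` is the height of the secant above the graph of `p` at `V`. As `p` is
strictly convex, `h > 0` on `(v₋, v₊)`; and `-p' > 0` because `p` is decreasing.
-/

open Set

theorem strictConvexOn_const_mul_rpow_of_neg {c r : ℝ} (hc : 0 < c) (hr : r < 0) :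
    StrictConvexOn ℝ (Ioi 0) fun x : ℝ => c * x ^ r := by
  refine StrictMonoOn.strictConvexOn_of_deriv (convex_Ioi 0) (fun x hx => ?_) ?_
  · exact ((Real.continuousAt_rpow_const x r (Or.inl hx.ne')).const_mul c).continuousWithinAt
  rw [interior_Ioi]
  intro x hx y _ hxy
  simp only [deriv_const_mul_field', Real.deriv_rpow_const]
  have hpow : y ^ (r - 1) < x ^ (r - 1) := Real.rpow_lt_rpow_of_neg hx hxy (by linarith)
  have hcr : 0 < c * -r := mul_pos hc (neg_pos.2 hr)
  nlinarith

theorem StrictConvexOn.lt_secant {s : Set ℝ} {f : ℝ → ℝ} (hf : StrictConvexOn ℝ s f) {x y z : ℝ}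
    (hx : x ∈ s) (hz : z ∈ s) (hxy : x < y) (hyz : y < z) :
    f y < f z - (f z - f x) / (z - x) * (z - y) := by
  have hslope := hf.secant_strict_mono_aux3 hx hz hxy hyz
  rw [lt_div_iff₀ (sub_pos.2 hyz)] at hslope
  linarith

theorem stmt_4_general (a γ α vminus vplus s : ℝ)
    (ha : 0 < a) (hγ : 1 < γ) (hα : 0 ≤ α)
    (hvm : 0 < vminus) (hvp : vminus < vplus)
    (p p' : ℝ → ℝ) (hp : ∀ v, p v = a * v ^ (-γ))
    (hp' : ∀ v, p' v = -a * γ * v ^ (-γ - 1))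
    (hs2 : s ^ 2 = -(p vplus - p vminus) / (vplus - vminus))
    (b : ℝ) (hb : b = -s ^ 2 * vplus - p vplus)
    (h f : ℝ → ℝ) (hh : ∀ V, h V = -s ^ 2 * V - p V - b)
    (hf : ∀ V, f V = -p' V + (α + 1) * h V / V) :
    ∀ V, vminus < V → V < vplus → 0 < f V := by
  intro V hVm hVp
  have hV : 0 < V := hvm.trans hVm
  have hγ₀ : 0 < γ := by linarith
  have hp_conv : StrictConvexOn ℝ (Ioi 0) p := by
    rw [funext hp]
    exact strictConvexOn_const_mul_rpow_of_neg ha (neg_neg_of_pos hγ₀)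
  have hh_pos : 0 < h V := by
    have hsec := hp_conv.lt_secant hvm (hvm.trans hvp) hVm hVp
    rw [hh, hb, hs2, neg_div]
    linarith
  have hp'_neg : p' V < 0 := by
    rw [hp', neg_mul, neg_mul, neg_lt_zero]
    positivity
  rw [hf]
  exact add_pos (neg_pos.2 hp'_neg) (div_pos (mul_pos (by linarith) hh_pos) hV)

/-- For `V ∈ (vminus, vplus)`, `f(V) = -p'(V) + (α+1) h(V)/V > 0`. -/
theorem stmt_4 (a γ α vminus vplus s : ℝ)
    (ha : 0 < a) (hγ : 1 < γ) (hα : 0 ≤ α)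
    (hvm : 0 < vminus) (hvp : vminus < vplus) (hspos : 0 < s)
    (p p' : ℝ → ℝ) (hp : ∀ v, p v = a * v ^ (-γ))
    (hp' : ∀ v, p' v = -a * γ * v ^ (-γ - 1))
    (hs2 : s ^ 2 = -(p vplus - p vminus) / (vplus - vminus))
    (b : ℝ) (hb : b = -s ^ 2 * vplus - p vplus)
    (h f : ℝ → ℝ) (hh : ∀ V, h V = -s ^ 2 * V - p V - b)
    (hf : ∀ V, f V = -p' V + (α + 1) * h V / V) :
    ∀ V, vminus < V → V < vplus → 0 < f V :=
  stmt_4_general a γ α vminus vplus s ha hγ hα hvm hvp p p' hp hp' hs2 b hb h f hh hf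
end

section
/- Let v₊ > 0, u₊ < 0, and p(v) = a v^{-γ} with a > 0, γ > 1. Then there exists a unique pair (v₋, s) with 0 < v₋ < v₊ and s > 0 satisfying the Rankine–Hugoniot conditions s(v₊ - v₋) = -u₊ and s u₊ = p(v₊) - p(v₋) (with u₋ = 0). -/
/-!
The Rankine–Hugoniot conditions force `s = -u₊ / (v₊ - v₋)` and reduce to the single equation
`(p v₋ - p v₊) (v₊ - v₋) = u₊²`. On `(0, v₊]` the left-hand side is continuous, strictly
decreasing (a product of two nonnegative strictly decreasing factors), vanishes at `v₊` and blows
up as `v₋ → 0⁺` because `p` does, so the equation has exactly one root in `(0, v₊)`.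
-/

open Filter Topology Set

def hugoniot (p : ℝ → ℝ) (vplus v : ℝ) : ℝ := (p v - p vplus) * (vplus - v)

section Hugoniot

variable {p : ℝ → ℝ} {vplus : ℝ}

@[simp]
lemma hugoniot_self : hugoniot p vplus vplus = 0 := by simp [hugoniot]

lemma hugoniot_strictAntiOn (hp : StrictAntiOn p (Ioi 0)) :
    StrictAntiOn (hugoniot p vplus) (Ioc 0 vplus) := by
  intro x hx y hy hxy
  have hpxy : p y < p x := hp hx.1 (hx.1.trans hxy) hxy
  have hpy : p vplus ≤ p y := hp.antitoneOn (hx.1.trans hxy) (hy.1.trans_le hy.2) hy.2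
  exact mul_lt_mul'' (by linarith) (by linarith) (by linarith) (by linarith [hy.2])

lemma continuousOn_hugoniot (hp : ContinuousOn p (Ioi 0)) :
    ContinuousOn (hugoniot p vplus) (Ioc 0 vplus) :=
  ((hp.mono Ioc_subset_Ioi_self).sub continuousOn_const).mul
    (continuousOn_const.sub continuousOn_id)

lemma tendsto_hugoniot_nhdsGT_zero (hp : Tendsto p (𝓝[>] 0) atTop) (hvp : 0 < vplus) :
    Tendsto (hugoniot p vplus) (𝓝[>] 0) atTop := by
  have hdist : Tendsto (fun v : ℝ => vplus - v) (𝓝[>] 0) (𝓝 vplus) := by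
    simpa using ((continuous_sub_left vplus).tendsto 0).mono_left nhdsWithin_le_nhds
  exact (tendsto_atTop_add_const_right _ _ hp).atTop_mul_pos hvp hdist

theorem existsUnique_hugoniot_eq (hp_anti : StrictAntiOn p (Ioi 0))
    (hp_cont : ContinuousOn p (Ioi 0)) (hp_lim : Tendsto p (𝓝[>] 0) atTop) (hvp : 0 < vplus)
    {c : ℝ} (hc : 0 < c) :
    ∃! v, v ∈ Ioo 0 vplus ∧ hugoniot p vplus v = c := by
  have hvp_mem : vplus ∈ Ioc 0 vplus := ⟨hvp, le_rfl⟩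
  obtain ⟨w, hwc, hw⟩ : ∃ w, c < hugoniot p vplus w ∧ w ∈ Ioo 0 vplus :=
    ((tendsto_hugoniot_nhdsGT_zero hp_lim hvp).eventually_gt_atTop c
      |>.and (Ioo_mem_nhdsGT hvp)).exists
  obtain ⟨v, hv, hvc⟩ : ∃ v ∈ Ioc 0 vplus, hugoniot p vplus v = c :=
    isPreconnected_Ioc.intermediate_value hvp_mem (Ioo_subset_Ioc_self hw)
      (continuousOn_hugoniot hp_cont) ⟨by simpa using hc.le, hwc.le⟩
  have hv_ne : v ≠ vplus := by rintro rfl; simp [hc.ne] at hvc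
  refine ⟨v, ⟨⟨hv.1, lt_of_le_of_ne hv.2 hv_ne⟩, hvc⟩, fun v' ⟨hv', hv'c⟩ => ?_⟩
  exact (hugoniot_strictAntiOn hp_anti).injOn (Ioo_subset_Ioc_self hv') hv (hv'c.trans hvc.symm)

end Hugoniot

lemma rankineHugoniot_iff {p : ℝ → ℝ} {vplus uplus v s : ℝ} (hv : v < vplus) :
    s * (vplus - v) = -uplus ∧ s * uplus = p vplus - p v ↔
      s = -uplus / (vplus - v) ∧ hugoniot p vplus v = uplus ^ 2 := by
  have hd : vplus - v ≠ 0 := sub_ne_zero.mpr hv.ne'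
  rw [← eq_div_iff hd]
  refine and_congr_right fun hs => ?_
  subst hs
  unfold hugoniot
  constructor <;> intro h
  · field_simp at h; linarith
  · field_simp; linarith

theorem existsUnique_twoShock {p : ℝ → ℝ} {vplus uplus : ℝ} (hp_anti : StrictAntiOn p (Ioi 0))
    (hp_cont : ContinuousOn p (Ioi 0)) (hp_lim : Tendsto p (𝓝[>] 0) atTop) (hvp : 0 < vplus)
    (hup : uplus < 0) :
    ∃! q : ℝ × ℝ, (0 < q.1 ∧ q.1 < vplus ∧ 0 < q.2) ∧
      q.2 * (vplus - q.1) = -uplus ∧ q.2 * uplus = p vplus - p q.1 := by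
  obtain ⟨v, ⟨hv, hvH⟩, hv_unique⟩ :=
    existsUnique_hugoniot_eq hp_anti hp_cont hp_lim hvp (sq_pos_of_ne_zero hup.ne)
  have hs : 0 < -uplus / (vplus - v) := div_pos (neg_pos.mpr hup) (sub_pos.mpr hv.2)
  refine ⟨(v, -uplus / (vplus - v)), ⟨⟨hv.1, hv.2, hs⟩, (rankineHugoniot_iff hv.2).mpr ⟨rfl, hvH⟩⟩,
    ?_⟩
  rintro ⟨v', s'⟩ ⟨⟨hv'0, hv'lt, -⟩, hRH⟩
  obtain ⟨hs', hv'H⟩ := (rankineHugoniot_iff hv'lt).mp hRH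
  obtain rfl : v' = v := hv_unique v' ⟨⟨hv'0, hv'lt⟩, hv'H⟩
  exact Prod.ext rfl hs'

/-- Existence and uniqueness of the left state `(vminus, 0)` and shock speed `s > 0`
from the Rankine–Hugoniot conditions. -/
theorem stmt_19 (a γ vplus uplus : ℝ)
    (ha : 0 < a) (hγ : 1 < γ) (hvp : 0 < vplus) (hup : uplus < 0)
    (p : ℝ → ℝ) (hp : ∀ v, p v = a * v ^ (-γ)) :
    ∃! q : ℝ × ℝ, (0 < q.1 ∧ q.1 < vplus ∧ 0 < q.2) ∧
      q.2 * (vplus - q.1) = -uplus ∧ q.2 * uplus = p vplus - p q.1 := by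
  have hexp : -γ < 0 := by linarith
  refine existsUnique_twoShock (p := p) ?_ ?_ ?_ hvp hup <;> rw [funext hp]
  · exact fun x hx y hy hxy =>
      mul_lt_mul_of_pos_left (Real.strictAntiOn_rpow_Ioi_of_exponent_neg hexp hx hy hxy) ha
  · exact continuousOn_const.mul (continuousOn_id.rpow_const fun x hx => Or.inl (ne_of_gt hx))
  · exact (tendsto_rpow_neg_nhdsGT_zero hexp).const_mul_atTop ha
end
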